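/- arXiv:2511.01622 — 2 statements merged into one kernel-verified Lean document; each statement's English description precedes it below -/
import Mathlib

section
/- Let A be a Noetherian abelian category that is Hom-finite over a commutative Noetherian ring R (i.e., Hom(A,B) is a finite-length R-module for all objects A, B) and in which every decreasing sequence of subobjects of an object admits an intersection. If A admits a weak generator G (an object such that Hom(G,E) = 0 implies E = 0), then A is Artinian, hence a length category. -/
open CategoryTheory CategoryTheory.Limits

section Aux

variable {C : Type*} [Category C] [Abelian C]

/-- In an abelian category, if `t ≫ cokernel.π A.arrow = 0` then `t` factors through the
subobject `A`. -/
lemma factors_of_comp_cokernelπ_eq_zero {X T : C} (A : Subobject X) (t : T ⟶ X)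
    (h : t ≫ cokernel.π A.arrow = 0) : A.Factors t := by
  rw [← Abelian.monoLift_comp A.arrow t h]
  exact Subobject.factors_comp_arrow _

/-- Key diagram chase: if `mS ≤ A` are subobjects of `X` and `t ≫ π` factors through the
image of `A` in `X/mS` (where `π` is the projection), then `t` factors through `A`. -/
lemma factors_of_comp_proj_factors {X T : C} (mS A : Subobject X) (hmA : mS ≤ A) (t : T ⟶ X)
    (ht : (imageSubobject (A.arrow ≫ cokernel.π mS.arrow)).Factors (t ≫ cokernel.π mS.arrow)) :
    A.Factors t := by
  have hmρ : mS.arrow ≫ cokernel.π A.arrow = 0 := by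
    rw [← Subobject.ofLE_arrow hmA, Category.assoc, cokernel.condition, comp_zero]
  set ρ' : cokernel mS.arrow ⟶ cokernel A.arrow :=
    cokernel.desc mS.arrow (cokernel.π A.arrow) hmρ with hρ'_def
  have hπρ' : cokernel.π mS.arrow ≫ ρ' = cokernel.π A.arrow := cokernel.π_desc _ _ _
  have hι : (imageSubobject (A.arrow ≫ cokernel.π mS.arrow)).arrow ≫ ρ' = 0 := by
    apply zero_of_epi_comp (factorThruImageSubobject (A.arrow ≫ cokernel.π mS.arrow))
    rw [← Category.assoc, imageSubobject_arrow_comp, Category.assoc, hπρ', cokernel.condition]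
  apply factors_of_comp_cokernelπ_eq_zero
  have hfac := (imageSubobject (A.arrow ≫ cokernel.π mS.arrow)).factorThru_arrow _ ht
  calc t ≫ cokernel.π A.arrow
      = (t ≫ cokernel.π mS.arrow) ≫ ρ' := by rw [Category.assoc, hπρ']
    _ = ((imageSubobject (A.arrow ≫ cokernel.π mS.arrow)).factorThru _ ht
          ≫ (imageSubobject (A.arrow ≫ cokernel.π mS.arrow)).arrow) ≫ ρ' := by rw [hfac]
    _ = (imageSubobject (A.arrow ≫ cokernel.π mS.arrow)).factorThru _ ht
          ≫ ((imageSubobject (A.arrow ≫ cokernel.π mS.arrow)).arrow ≫ ρ') := by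
        rw [Category.assoc]
    _ = 0 := by rw [hι, comp_zero]

/-- If `g : G ⟶ X/m` factors through the image of `f n` for every `n`, where `m` is the
greatest lower bound of the antitone sequence `f`, then `g = 0`. -/
lemma comp_eq_zero_of_factors_all {X G : C} (f : ℕ → Subobject X) (hanti : Antitone f)
    (m : Subobject X) (hm : IsGLB (Set.range f) m) (g : G ⟶ cokernel m.arrow)
    (hg : ∀ n, (imageSubobject ((f n).arrow ≫ cokernel.π m.arrow)).Factors g) : g = 0 := by
  have hmle : ∀ n, m ≤ f n := fun n => hm.1 ⟨n, rfl⟩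
  have hB : ∀ n, imageSubobject g ≤ imageSubobject ((f n).arrow ≫ cokernel.π m.arrow) :=
    fun n => imageSubobject_le g (Subobject.factorThru _ g (hg n))
      (Subobject.factorThru_arrow _ g (hg n))
  set t : pullback (cokernel.π m.arrow) (imageSubobject g).arrow ⟶ X :=
    pullback.fst (cokernel.π m.arrow) (imageSubobject g).arrow with ht_def
  have hcond : t ≫ cokernel.π m.arrow =
      pullback.snd (cokernel.π m.arrow) (imageSubobject g).arrow ≫ (imageSubobject g).arrow :=
    pullback.condition
  have htn : ∀ n, (f n).Factors t := by
    intro n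
    apply factors_of_comp_proj_factors m (f n) (hmle n) t
    rw [hcond]
    exact Subobject.factors_of_le _ (hB n) (Subobject.factors_comp_arrow _)
  have him : imageSubobject t ≤ m := by
    apply hm.2
    rintro b ⟨n, rfl⟩
    exact imageSubobject_le t ((f n).factorThru t (htn n)) ((f n).factorThru_arrow t (htn n))
  have ht1 : (imageSubobject t).Factors t := by
    have h1 := Subobject.factors_comp_arrow (factorThruImageSubobject t)
    rwa [imageSubobject_arrow_comp] at h1
  have htm : m.Factors t := Subobject.factors_of_le t him ht1
  have htπ : t ≫ cokernel.π m.arrow = 0 := by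
    rw [← m.factorThru_arrow t htm, Category.assoc, cokernel.condition, comp_zero]
  have hBarrow : (imageSubobject g).arrow = 0 := by
    apply zero_of_epi_comp (pullback.snd (cokernel.π m.arrow) (imageSubobject g).arrow)
    rw [← hcond, htπ]
  calc g = factorThruImageSubobject g ≫ (imageSubobject g).arrow :=
        (imageSubobject_arrow_comp g).symm
    _ = 0 := by rw [hBarrow, comp_zero]

end Aux

/-- A Noetherian abelian category which is Hom-finite over a commutative
Noetherian ring `R` and admits intersections of decreasing sequences of subobjects, and
which has a weak generator `G`, is Artinian (hence a length category). -/
theorem artinian_of_weakGenerator_of_homFinite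
    (R : Type*) [CommRing R] [IsNoetherianRing R]
    (C : Type*) [Category C] [Abelian C] [CategoryTheory.Linear R C]
    -- `C` is Noetherian: every object is a Noetherian object
    (hNoeth : ∀ X : C, IsNoetherianObject X)
    -- `C` is Hom-finite over `R`: all Hom-modules have finite length over `R`
    (hHomFinite : ∀ A B : C, IsFiniteLength R (A ⟶ B))
    -- decreasing sequences of subobjects admit intersections (greatest lower bounds)
    (hInter : ∀ (X : C) (f : ℕ → Subobject X), Antitone f → ∃ m, IsGLB (Set.range f) m)
    -- `G` is a weak generator: `Hom(G, E) = 0` implies `E = 0`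
    (G : C) (hG : ∀ E : C, (∀ g : G ⟶ E, g = 0) → IsZero E) :
    ∀ X : C, IsArtinianObject X := by
  intro X
  refine ⟨⟨?_⟩⟩
  rw [RelEmbedding.wellFounded_iff_isEmpty]
  by_contra hne
  rw [not_isEmpty_iff] at hne
  obtain ⟨e⟩ := hne
  set f : ℕ → Subobject X := fun n => e n with hf_def
  have hstrict : ∀ n, f (n + 1) < f n := fun n => e.map_rel_iff.2 (Nat.lt_succ_self n)
  have hanti : Antitone f := antitone_nat_of_succ_le fun n => (hstrict n).le
  obtain ⟨m, hm⟩ := hInter X f hanti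
  have hmle : ∀ n, m ≤ f n := fun n => hm.1 ⟨n, rfl⟩
  -- the antitone chain of images in `Q = X/m`
  have hf'anti : ∀ {k n : ℕ}, k ≤ n →
      imageSubobject ((f n).arrow ≫ cokernel.π m.arrow) ≤
        imageSubobject ((f k).arrow ≫ cokernel.π m.arrow) := by
    intro k n hkn
    exact imageSubobject_le _
      (Subobject.ofLE _ _ (hanti hkn) ≫ factorThruImageSubobject ((f k).arrow ≫ cokernel.π m.arrow))
      (by rw [Category.assoc, imageSubobject_arrow_comp, ← Category.assoc,
        Subobject.ofLE_arrow])
  -- the chain of submodules `H n ⊆ Hom(G, Q)` of maps factoring through the image of `f n`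
  set H : ℕ → Submodule R (G ⟶ cokernel m.arrow) := fun n =>
    LinearMap.range (Linear.rightComp R G
      (imageSubobject ((f n).arrow ≫ cokernel.π m.arrow)).arrow) with hH_def
  have hHmem : ∀ (n : ℕ) (g : G ⟶ cokernel m.arrow),
      g ∈ H n ↔ (imageSubobject ((f n).arrow ≫ cokernel.π m.arrow)).Factors g := by
    intro n g
    constructor
    · rintro ⟨u, rfl⟩
      exact Subobject.factors_comp_arrow u
    · intro h
      exact ⟨Subobject.factorThru _ g h, Subobject.factorThru_arrow _ g h⟩
  have hHanti : ∀ {k n : ℕ}, k ≤ n → H n ≤ H k := by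
    intro k n hkn g hg
    rw [hHmem] at hg ⊢
    exact Subobject.factors_of_le _ (hf'anti hkn) hg
  -- `Hom(G, Q)` is an Artinian `R`-module, so the chain stabilizes
  have hArt : IsArtinian R (G ⟶ cokernel m.arrow) :=
    (isFiniteLength_iff_isNoetherian_isArtinian.mp (hHomFinite G (cokernel m.arrow))).2
  obtain ⟨M, hM⟩ := IsArtinian.monotone_stabilizes
    (⟨fun n => OrderDual.toDual (H n), fun k n hkn => hHanti hkn⟩ :
      ℕ →o (Submodule R (G ⟶ cokernel m.arrow))ᵒᵈ)
  -- every element of `H M` factors through all images, hence is zero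
  have hHM : ∀ g : G ⟶ cokernel m.arrow, g ∈ H M → g = 0 := by
    intro g hg
    apply comp_eq_zero_of_factors_all f hanti m hm g
    intro n
    rw [← hHmem]
    rcases le_total n M with h | h
    · exact hHanti h hg
    · have hMn : H M = H n := hM n h
      rw [← hMn]
      exact hg
  -- hence `Hom(G, image of f M) = 0`, so this image is zero by the weak generator property
  have hGf'M : ∀ h : G ⟶ ((imageSubobject ((f M).arrow ≫ cokernel.π m.arrow) : Subobject _) : C),
      h = 0 := by
    intro h
    have hh : h ≫ (imageSubobject ((f M).arrow ≫ cokernel.π m.arrow)).arrow = 0 :=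
      hHM _ ⟨h, rfl⟩
    exact zero_of_comp_mono _ hh
  have hZ : IsZero (((imageSubobject ((f M).arrow ≫ cokernel.π m.arrow) : Subobject _) : C)) :=
    hG _ hGf'M
  have hf'M : (imageSubobject ((f M).arrow ≫ cokernel.π m.arrow)).arrow = 0 :=
    hZ.eq_of_src _ _
  -- therefore `(f M).arrow ≫ π = 0`, so `f M ≤ m`
  have hfMπ : (f M).arrow ≫ cokernel.π m.arrow = 0 := by
    calc (f M).arrow ≫ cokernel.π m.arrow
        = factorThruImageSubobject ((f M).arrow ≫ cokernel.π m.arrow) ≫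
            (imageSubobject ((f M).arrow ≫ cokernel.π m.arrow)).arrow :=
          (imageSubobject_arrow_comp _).symm
      _ = 0 := by rw [hf'M, comp_zero]
  have hfMm : f M ≤ m := by
    have hfac : m.Factors (f M).arrow := factors_of_comp_cokernelπ_eq_zero m _ hfMπ
    exact Subobject.le_of_comm (m.factorThru _ hfac) (m.factorThru_arrow _ hfac)
  -- contradiction with strict descent
  exact absurd ((hstrict M).trans_le (hfMm.trans (hmle (M + 1)))) (lt_irrefl _)
end

section
/- Let A be a Noetherian abelian category, Hom-finite over a commutative Noetherian ring R, admitting intersections of decreasing sequences of subobjects, with a weak generator G. Then for any object N with a strictly decreasing chain of subobjects N = N_0 ⊋ N_1 ⊋ ⋯ whose intersection is zero, there exists an index i such that Hom(G, N_i) = 0, and hence N_i = 0, a contradiction; in particular no such chain exists. -/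
open CategoryTheory CategoryTheory.Limits

/-- In a Noetherian abelian category, Hom-finite over a commutative Noetherian
ring `R`, admitting intersections of decreasing sequences of subobjects and having a weak
generator `G`, there is no object `N` with a strictly decreasing chain of subobjects
`N = N₀ ⊋ N₁ ⊋ ⋯` whose intersection is zero: for any such chain some `Hom(G, Nᵢ) = 0`,
hence `Nᵢ = 0`, a contradiction. -/
theorem no_strictAnti_chain_with_zero_intersection
    (R : Type*) [CommRing R] [IsNoetherianRing R]
    (C : Type*) [Category C] [Abelian C] [CategoryTheory.Linear R C]
    (hNoeth : ∀ X : C, IsNoetherianObject X)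
    (hHomFinite : ∀ A B : C, IsFiniteLength R (A ⟶ B))
    (hInter : ∀ (X : C) (f : ℕ → Subobject X), Antitone f → ∃ m, IsGLB (Set.range f) m)
    (G : C) (hG : ∀ E : C, (∀ g : G ⟶ E, g = 0) → IsZero E)
    -- a strictly decreasing chain of subobjects of `N`, starting at `N` itself,
    -- whose intersection is zero
    (N : C) (N' : ℕ → Subobject N) (hchain : StrictAnti N') (htop : N' 0 = ⊤)
    (hzero : IsGLB (Set.range N') ⊥) :
    (∃ i, ∀ g : G ⟶ (N' i : C), g = 0) ∧ False := by
  -- The submodules `Hom(G, N' i)` of `Hom(G, N)`.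
  let S : ℕ → Submodule R (G ⟶ N) := fun i =>
    { carrier := {g | (N' i).Factors g}
      add_mem' := fun {a b} ha hb => by
        have h := Subobject.factors_comp_arrow
          ((N' i).factorThru a ha + (N' i).factorThru b hb)
        simpa [Preadditive.add_comp] using h
      zero_mem' := Subobject.factors_zero
      smul_mem' := fun r g hg => by
        have h := Subobject.factors_comp_arrow (r • (N' i).factorThru g hg)
        simpa using h }
  have hSanti : Antitone S := fun i j hij g hg =>
    Subobject.factors_of_le g (hchain.antitone hij) hg
  -- `Hom(G, N)` is Artinian, so the chain `S` stabilizes.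
  have hArt : IsArtinian R (G ⟶ N) :=
    (isFiniteLength_iff_isNoetherian_isArtinian.mp (hHomFinite G N)).2
  obtain ⟨n, hn⟩ := IsArtinian.monotone_stabilizes
    (⟨fun i => OrderDual.toDual (S i), fun i j hij => hSanti hij⟩ : ℕ →o (Submodule R (G ⟶ N))ᵒᵈ)
  -- The stable value is contained in every `S m`, hence is zero.
  have hSbot : S n = ⊥ := by
    ext g
    simp only [Submodule.mem_bot]
    constructor
    · intro hg
      have hall : ∀ m, (N' m).Factors g := by
        intro m
        rcases le_total m n with h | h
        · exact hSanti h hg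
        · have heq : S n = S m := hn m h
          show g ∈ S m
          rw [← heq]; exact hg
      -- the image of `g` is below every `N' m`, hence below the GLB `⊥`.
      have himg : imageSubobject g ≤ ⊥ := by
        apply hzero.2
        rintro P ⟨m, rfl⟩
        exact imageSubobject_le g ((N' m).factorThru g (hall m))
          (Subobject.factorThru_arrow _ _ _)
      have harrow : (imageSubobject g).arrow = 0 := by
        rw [← Subobject.ofLE_arrow himg, Subobject.bot_arrow, Limits.comp_zero]
      calc g = factorThruImageSubobject g ≫ (imageSubobject g).arrow := by simp
        _ = 0 := by rw [harrow, Limits.comp_zero]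
    · rintro rfl; exact Subobject.factors_zero
  -- Hence every map `G ⟶ N' n` is zero.
  have hzeroHom : ∀ g : G ⟶ (N' n : C), g = 0 := by
    intro g
    have : g ≫ (N' n).arrow ∈ S n := Subobject.factors_comp_arrow g
    rw [hSbot, Submodule.mem_bot] at this
    have := this.trans (Limits.zero_comp (f := (N' n).arrow)).symm
    exact (cancel_mono (N' n).arrow).mp this
  refine ⟨⟨n, hzeroHom⟩, ?_⟩
  -- So `N' n` is zero, contradicting strict descent.
  have hiz : IsZero ((N' n : C)) := hG _ hzeroHom
  have hle : N' n ≤ N' (n + 1) :=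
    Subobject.le_of_comm (0 : (N' n : C) ⟶ (N' (n + 1) : C))
      (by rw [Limits.zero_comp]; exact (hiz.eq_zero_of_src _).symm)
  exact absurd hle (hchain (Nat.lt_succ_self n)).not_ge
end
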